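/- Consider the (n+m)×(n+m) unmodified Laplacian L_G = [[L_{C_n}, 0],[-C, L_{S_m} + D_C]] of model III with w_i ≥ 0, w = Σ w_i > 0. Its spectrum is the union {α_l : 0 ≤ l ≤ n, l even} ∪ {β⁻_{m,w}, 1, β⁺_{m,w}}, where α_l = 2(1-cos(lπ/n)) and β^±_{m,w} are the roots of λ² - (m+w)λ + w = 0. In particular, if β⁻_{m,w} ∉ {α_l}, the spectral gap (second-smallest eigenvalue) of L_G equals min{α_2, β⁻_{m,w}}. -/

import Mathlib

open Matrix

/-- Laplacian of the undirected cycle on `n` vertices. -/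
def cycleLap (n : ℕ) : Matrix (Fin n) (Fin n) ℝ :=
  fun i j => if i = j then 2
    else if (i.val + 1) % n = j.val ∨ (j.val + 1) % n = i.val then -1 else 0

/-- Laplacian of the undirected star on `m` vertices, hub first. -/
def starLap (m : ℕ) : Matrix (Fin m) (Fin m) ℝ :=
  fun i j =>
    if i.val = 0 ∧ j.val = 0 then (m : ℝ) - 1
    else if i.val = 0 ∨ j.val = 0 then -1
    else if i = j then 1 else 0

/-- `α_l = 2(1 - cos(lπ/n))`. -/
noncomputable def cycAlpha (n l : ℕ) : ℝ := 2 * (1 - Real.cos (l * Real.pi / n))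

/-- smaller root of `λ² - (m+w)λ + w`. -/
noncomputable def betaMinus (m : ℕ) (w : ℝ) : ℝ :=
  (((m : ℝ) + w) - Real.sqrt (((m : ℝ) + w) ^ 2 - 4 * w)) / 2

/-- larger root of `λ² - (m+w)λ + w`. -/
noncomputable def betaPlus (m : ℕ) (w : ℝ) : ℝ :=
  (((m : ℝ) + w) + Real.sqrt (((m : ℝ) + w) ^ 2 - 4 * w)) / 2

/-- The unmodified Laplacian `L_G = [[L_{C_n}, 0], [-C, L_{S_m} + D_C]]` of model III. -/
noncomputable def unmodLap (n m : ℕ) (wv : ℕ → ℝ) :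
    Matrix (Fin n ⊕ Fin m) (Fin n ⊕ Fin m) ℝ :=
  Matrix.fromBlocks (cycleLap n) 0
    (fun i j => -(if i.val = 0 then wv j.val else 0))
    (starLap m + Matrix.diagonal
      (fun i : Fin m => if i.val = 0 then ∑ j ∈ Finset.range n, wv j else 0))

/-!
`L_G` is block lower triangular, so its spectrum is the union of the spectra of `L_{C_n}` and of
the weighted star `L_{S_m} + D_C`. The cycle Laplacian is circulant, hence diagonalized by the
Fourier (Vandermonde) matrix of an `n`-th root of unity `ζ`, with eigenvalues
`2 - ζ^k - ζ^{-k} = 2 - 2 cos (2πk/n) = α_{2k}`. For the weighted star, differences of two leaf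
indicator vectors are eigenvectors for `1`; any eigenvector for `λ ≠ 1` is constant on the leaves,
and the hub equation then reduces to `λ² - (m + w)λ + w = 0`. The gap follows because `α_l` is
increasing for `0 ≤ l ≤ n`, while `0 < β⁻ < 1` and `β⁻ ≤ β⁺`.
-/

namespace Matrix

variable {K : Type*} [Field K] {ι κ : Type*} [Fintype ι] [DecidableEq ι] [Fintype κ] [DecidableEq κ]

theorem spectrum_fromBlocks_zero₁₂ (A : Matrix ι ι K) (C : Matrix κ ι K) (D : Matrix κ κ K) :
    spectrum K (fromBlocks A 0 C D) = spectrum K A ∪ spectrum K D := by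
  ext x
  simp only [Set.mem_union, mem_spectrum_iff_isRoot_charpoly, charpoly_fromBlocks_zero₁₂,
    Polynomial.IsRoot, Polynomial.eval_mul, mul_eq_zero]

theorem mem_spectrum_iff_exists_mulVec_eq_smul (A : Matrix ι ι K) (x : K) :
    x ∈ spectrum K A ↔ ∃ v ≠ 0, A *ᵥ v = x • v := by
  rw [← spectrum_toLin', ← Module.End.hasEigenvalue_iff_mem_spectrum]
  constructor
  · intro h
    obtain ⟨v, hv, hv0⟩ := h.exists_hasEigenvector
    exact ⟨v, hv0, by simpa using hv⟩
  · rintro ⟨v, hv0, hv⟩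
    exact Module.End.hasEigenvalue_of_hasEigenvector ⟨by simpa using hv, hv0⟩

theorem mem_spectrum_map_iff {L : Type*} [Field L] (f : K →+* L) (A : Matrix ι ι K) (x : K) :
    f x ∈ spectrum L (A.map f) ↔ x ∈ spectrum K A := by
  rw [mem_spectrum_iff_isRoot_charpoly, mem_spectrum_iff_isRoot_charpoly, charpoly_map,
    Polynomial.isRoot_map_iff f.injective]

end Matrix

namespace IsPrimitiveRoot

variable {K : Type*} [Field K] {n : ℕ} {ζ : K}

theorem pow_val_add_mul (hζ : IsPrimitiveRoot ζ n) (i j : Fin n) (k : ℕ) :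
    ζ ^ ((i + j).val * k) = ζ ^ (i.val * k) * ζ ^ (j.val * k) := by
  have hmod : ∀ x, ζ ^ (x % n) = ζ ^ x := fun x => hζ.eq_orderOf ▸ pow_mod_orderOf ζ x
  rw [← pow_add, ← add_mul, Fin.val_add, ← hmod, Nat.mod_mul_mod, hmod]

theorem pow_val_sub_mul [NeZero n] (hζ : IsPrimitiveRoot ζ n) (i j : Fin n) (k : ℕ) :
    ζ ^ ((i - j).val * k) = ζ ^ (i.val * k) * ζ⁻¹ ^ (j.val * k) := by
  have hζ0 : ζ ^ (j.val * k) ≠ 0 := pow_ne_zero _ (hζ.ne_zero i.pos.ne')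
  rw [inv_pow, eq_mul_inv_iff_mul_eq₀ hζ0, ← pow_val_add_mul hζ, sub_add_cancel]

end IsPrimitiveRoot

namespace Matrix

variable {K : Type*} [Field K] {n : ℕ} {ζ : K}

theorem circulant_mul_vandermonde [NeZero n] (hζ : IsPrimitiveRoot ζ n) (v : Fin n → K) :
    circulant v * vandermonde (fun i : Fin n => ζ ^ i.val) =
      vandermonde (fun i : Fin n => ζ ^ i.val) *
        diagonal fun k => ∑ j, v j * ζ⁻¹ ^ (j.val * k.val) := by
  ext i k
  rw [mul_diagonal]
  simp only [mul_apply, circulant_apply, vandermonde_apply, ← pow_mul, Finset.mul_sum]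
  rw [← (Equiv.subLeft i).sum_comp]
  refine Finset.sum_congr rfl fun j _ => ?_
  rw [Equiv.subLeft_apply, sub_sub_cancel, hζ.pow_val_sub_mul]
  ring

theorem isUnit_vandermonde_pow (hζ : IsPrimitiveRoot ζ n) :
    IsUnit (vandermonde fun i : Fin n => ζ ^ i.val) := by
  rw [isUnit_iff_isUnit_det, isUnit_iff_ne_zero, det_vandermonde_ne_zero_iff]
  exact fun a b h => Fin.ext (hζ.pow_inj a.isLt b.isLt h)

theorem spectrum_circulant [NeZero n] (hζ : IsPrimitiveRoot ζ n) (v : Fin n → K) :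
    spectrum K (circulant v) = Set.range fun k : Fin n => ∑ j, v j * ζ⁻¹ ^ (j.val * k.val) := by
  obtain ⟨F, hF⟩ := isUnit_vandermonde_pow hζ
  have hconj : circulant v = F * diagonal (fun k : Fin n => ∑ j, v j * ζ⁻¹ ^ (j.val * k.val)) *
      (F⁻¹ : (Matrix (Fin n) (Fin n) K)ˣ) := by
    rw [hF, ← circulant_mul_vandermonde hζ, ← hF, mul_assoc, Units.mul_inv, mul_one]
  rw [hconj, spectrum.units_conjugate, spectrum_diagonal]

end Matrix

theorem cycleLap_eq_circulant (n : ℕ) :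
    cycleLap (n + 3) = circulant (2 • Pi.single 0 1 - Pi.single 1 1 - Pi.single (-1) 1) := by
  have hsucc : ∀ a b : Fin (n + 3), (a.val + 1) % (n + 3) = b.val ↔ a - b = -1 := by
    intro a b
    rw [sub_eq_iff_eq_add, eq_neg_add_iff_add_eq, add_comm, Fin.ext_iff, Fin.val_add, Fin.val_one]
  ext i j
  simp only [cycleLap, circulant_apply, Pi.sub_apply, Pi.smul_apply, Pi.single_apply, hsucc]
  have hne : (1 : Fin (n + 3)) ≠ -1 := by
    rw [Ne, Fin.ext_iff, Fin.coe_neg_one, Fin.val_one]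
    omega
  simp only [show j - i = -1 ↔ i - j = 1 by rw [← neg_sub, neg_inj]]
  split_ifs <;> simp_all [sub_eq_zero]

theorem cycAlpha_two_mul_eq (n : ℕ) (k : ℕ) :
    cycAlpha n (2 * k) = 2 - 2 * Real.cos (2 * Real.pi * k / n) := by
  rw [cycAlpha]
  push_cast
  ring_nf

theorem exists_cycAlpha_two_mul_iff {n : ℕ} (hn : n ≠ 0) (x : ℝ) :
    (∃ k : Fin n, cycAlpha n (2 * k) = x) ↔ ∃ l, l ≤ n ∧ Even l ∧ x = cycAlpha n l := by
  constructor
  · rintro ⟨k, rfl⟩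
    by_cases hk : 2 * k.val ≤ n
    · exact ⟨2 * k, hk, even_two_mul _, rfl⟩
    · refine ⟨2 * (n - k), by omega, even_two_mul _, ?_⟩
      rw [cycAlpha_two_mul_eq, cycAlpha_two_mul_eq, Nat.cast_sub k.isLt.le, ← Real.cos_two_pi_sub]
      congr 3
      field_simp
  · rintro ⟨_, hl, ⟨r, rfl⟩, rfl⟩
    exact ⟨⟨r, by omega⟩, by rw [two_mul]⟩

theorem cycAlpha_zero (n : ℕ) : cycAlpha n 0 = 0 := by
  simp [cycAlpha]

theorem cycAlpha_pos {n l : ℕ} (hl : 0 < l) (hln : l ≤ n) : 0 < cycAlpha n l := by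
  have hn : (0 : ℝ) < n := by exact_mod_cast hl.trans_le hln
  have hcos : Real.cos (l * Real.pi / n) < Real.cos 0 := by
    apply Real.cos_lt_cos_of_nonneg_of_le_pi le_rfl
    · rw [div_le_iff₀ hn, mul_comm]
      gcongr
    · positivity
  rw [Real.cos_zero] at hcos
  rw [cycAlpha]
  linarith

theorem cycAlpha_le_cycAlpha {n k l : ℕ} (hkl : k ≤ l) (hln : l ≤ n) :
    cycAlpha n k ≤ cycAlpha n l := by
  rcases Nat.eq_zero_or_pos n with rfl | hn
  · simp [cycAlpha]
  have hn' : (0 : ℝ) < n := by exact_mod_cast hn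
  have hcos : Real.cos (l * Real.pi / n) ≤ Real.cos (k * Real.pi / n) := by
    apply Real.cos_le_cos_of_nonneg_of_le_pi (by positivity)
    · rw [div_le_iff₀ hn', mul_comm]
      gcongr
    · gcongr
  rw [cycAlpha, cycAlpha]
  linarith

-- The eigenvalue that `Matrix.spectrum_circulant` attaches to `k` for the symbol of `cycleLap`.
theorem cycleLap_eigenvalue (n k : ℕ) :
    ∑ j : Fin (n + 3), Complex.ofRealHom
        ((2 • Pi.single 0 1 - Pi.single 1 1 - Pi.single (-1) 1 : Fin (n + 3) → ℝ) j) *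
        (Complex.exp (2 * Real.pi * Complex.I / (n + 3 : ℕ)))⁻¹ ^ (j.val * k) =
      cycAlpha (n + 3) (2 * k) := by
  set ζ := Complex.exp (2 * Real.pi * Complex.I / (n + 3 : ℕ)) with hζdef
  have hζ : ζ ^ (n + 3) = 1 := (Complex.isPrimitiveRoot_exp (n + 3) (by omega)).pow_eq_one
  have hpow : ζ ^ k = Complex.exp (↑(2 * Real.pi * k / (n + 3 : ℕ)) * Complex.I) := by
    rw [hζdef, ← Complex.exp_nat_mul]
    push_cast
    ring_nf
  clear_value ζ
  have hinv : ζ⁻¹ ^ ((n + 2) * k) = ζ ^ k := by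
    have : ζ ^ k * ζ ^ ((n + 2) * k) = 1 := by
      rw [← pow_add, show k + (n + 2) * k = (n + 3) * k by ring, pow_mul, hζ, one_pow]
    rw [inv_pow, eq_inv_of_mul_eq_one_right this, inv_inv]
  have hc (j : Fin (n + 3)) : Complex.ofRealHom
      ((2 • Pi.single 0 1 - Pi.single 1 1 - Pi.single (-1) 1 : Fin (n + 3) → ℝ) j) =
      (2 • Pi.single 0 1 - Pi.single 1 1 - Pi.single (-1) 1 : Fin (n + 3) → ℂ) j := by
    simp only [Pi.sub_apply, Pi.smul_apply, Pi.single_apply]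
    split_ifs <;> simp
  simp only [hc]
  change dotProduct _ _ = _
  rw [sub_dotProduct, sub_dotProduct, smul_dotProduct, single_dotProduct, single_dotProduct,
    single_dotProduct, Fin.val_zero, Fin.val_one, Fin.coe_neg_one, hinv]
  simp only [zero_mul, one_mul, pow_zero]
  rw [inv_pow, hpow, ← Complex.exp_neg, cycAlpha_two_mul_eq, Complex.ofReal_sub,
    Complex.ofReal_mul, Complex.ofReal_cos, Complex.ofReal_ofNat, Complex.two_cos, neg_mul,
    two_nsmul]
  ring

theorem spectrum_cycleLap {n : ℕ} (hn : 3 ≤ n) :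
    spectrum ℝ (cycleLap n) = {x | ∃ l, l ≤ n ∧ Even l ∧ x = cycAlpha n l} := by
  obtain ⟨n, rfl⟩ : ∃ k, n = k + 3 := ⟨n - 3, by omega⟩
  have hspec : spectrum ℂ ((cycleLap (n + 3)).map Complex.ofRealHom) =
      Set.range fun k : Fin (n + 3) => ((cycAlpha (n + 3) (2 * k) : ℝ) : ℂ) := by
    rw [cycleLap_eq_circulant, map_circulant,
      spectrum_circulant (Complex.isPrimitiveRoot_exp (n + 3) (by omega))]
    simp only [cycleLap_eigenvalue]
  ext x
  rw [← mem_spectrum_map_iff Complex.ofRealHom, hspec, Set.mem_ofPred_eq,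
    ← exists_cycAlpha_two_mul_iff (by omega)]
  simp

theorem quadratic_eq_zero_iff_betaMinus_or_betaPlus {m : ℕ} (hm : 1 ≤ m) (w x : ℝ) :
    x ^ 2 - ((m : ℝ) + w) * x + w = 0 ↔ x = betaMinus m w ∨ x = betaPlus m w := by
  have hdisc : 0 ≤ ((m : ℝ) + w) ^ 2 - 4 * w := by
    have hm' : (1 : ℝ) ≤ m := by exact_mod_cast hm
    nlinarith [sq_nonneg ((m : ℝ) + w - 2)]
  have hs : discrim 1 (-((m : ℝ) + w)) w =
      √(((m : ℝ) + w) ^ 2 - 4 * w) * √(((m : ℝ) + w) ^ 2 - 4 * w) := by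
    rw [Real.mul_self_sqrt hdisc, discrim]
    ring
  rw [show x ^ 2 - ((m : ℝ) + w) * x + w = 1 * (x * x) + -((m : ℝ) + w) * x + w by ring,
    quadratic_eq_zero_iff one_ne_zero hs, betaMinus, betaPlus, neg_neg, mul_one, or_comm]

theorem betaMinus_pos {m : ℕ} {w : ℝ} (hw : 0 < w) : 0 < betaMinus m w := by
  have hsqrt : √(((m : ℝ) + w) ^ 2 - 4 * w) < m + w := by
    rw [Real.sqrt_lt' (by positivity)]
    linarith
  rw [betaMinus]
  linarith

theorem betaMinus_lt_one {m : ℕ} (hm : 2 ≤ m) {w : ℝ} (hw : 0 ≤ w) : betaMinus m w < 1 := by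
  have hm' : (2 : ℝ) ≤ m := by exact_mod_cast hm
  have hsqrt : (m : ℝ) + w - 2 < √(((m : ℝ) + w) ^ 2 - 4 * w) := by
    rw [Real.lt_sqrt (by linarith)]
    nlinarith
  rw [betaMinus]
  linarith

theorem betaMinus_le_betaPlus (m : ℕ) (w : ℝ) : betaMinus m w ≤ betaPlus m w := by
  rw [betaMinus, betaPlus]
  linarith [Real.sqrt_nonneg (((m : ℝ) + w) ^ 2 - 4 * w)]

def weightedStarLap (m : ℕ) (w : ℝ) : Matrix (Fin m) (Fin m) ℝ :=
  starLap m + diagonal fun i : Fin m => if i.val = 0 then w else 0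

section WeightedStar

variable {m : ℕ} [NeZero m] (w : ℝ)

theorem weightedStarLap_apply (i j : Fin m) :
    weightedStarLap m w i j =
      if i = 0 then (if j = 0 then (m : ℝ) + w else 0) - 1
      else (if j = i then 1 else 0) - if j = 0 then 1 else 0 := by
  simp only [weightedStarLap, Matrix.add_apply, starLap, diagonal_apply, Fin.val_eq_zero_iff]
  by_cases hi : i = 0 <;> by_cases hj : j = 0 <;> simp_all [eq_comm]
  ring

theorem weightedStarLap_mulVec (v : Fin m → ℝ) (i : Fin m) :
    (weightedStarLap m w *ᵥ v) i =
      if i = 0 then ((m : ℝ) + w) * v 0 - ∑ j, v j else v i - v 0 := by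
  simp only [mulVec, dotProduct, weightedStarLap_apply]
  split_ifs <;> simp [sub_mul, ite_mul, Finset.sum_sub_distrib]

theorem quadratic_eq_zero_of_weightedStarLap {v : Fin m → ℝ} {x : ℝ} (hv : v ≠ 0)
    (hvx : weightedStarLap m w *ᵥ v = x • v) (hx : x ≠ 1) : x ^ 2 - ((m : ℝ) + w) * x + w = 0 := by
  have hrow (i : Fin m) := congrFun hvx i
  simp only [weightedStarLap_mulVec, Pi.smul_apply, smul_eq_mul] at hrow
  have hleaf (i : Fin m) : (1 - x) * v i = v 0 - if i = 0 then x * v 0 else 0 := by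
    have := hrow i
    split_ifs at this ⊢ with hi
    · subst hi; ring
    · linarith
  have hsum : (1 - x) * ∑ j, v j = m * v 0 - x * v 0 := by
    simp [Finset.mul_sum, hleaf, Finset.sum_sub_distrib]
  have hv0 : v 0 ≠ 0 := by
    intro h0
    refine hv (funext fun i => ?_)
    simpa [h0, sub_eq_zero, Ne.symm hx] using hleaf i
  have hhub := hrow 0
  rw [if_pos rfl] at hhub
  apply (mul_left_inj' hv0).mp
  linear_combination (1 - x) * hhub + hsum

theorem weightedStarLap_mulVec_of_quadratic {x : ℝ} (hx : x ^ 2 - ((m : ℝ) + w) * x + w = 0) :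
    weightedStarLap m w *ᵥ (fun i => if i = 0 then 1 - x else 1) =
      x • fun i => if i = 0 then 1 - x else 1 := by
  have hsum : ∑ j : Fin m, (if j = 0 then 1 - x else 1) = m - x := by
    calc ∑ j : Fin m, (if j = 0 then 1 - x else 1) = ∑ j : Fin m, (1 - if j = 0 then x else 0) :=
          Finset.sum_congr rfl fun j _ => by split_ifs <;> ring
      _ = m - x := by simp [Finset.sum_sub_distrib]
  funext i
  rw [weightedStarLap_mulVec, hsum, Pi.smul_apply, smul_eq_mul]
  by_cases hi : i = 0
  · simp only [hi, ↓reduceIte]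
    linear_combination hx
  · simp only [hi, ↓reduceIte]
    ring

theorem weightedStarLap_mulVec_single_sub_single {a b : Fin m} (ha : a ≠ 0) (hb : b ≠ 0) :
    weightedStarLap m w *ᵥ (Pi.single a 1 - Pi.single b 1) = Pi.single a 1 - Pi.single b 1 := by
  funext i
  rw [weightedStarLap_mulVec]
  split_ifs with hi
  · simp [Finset.sum_sub_distrib, hi, ha.symm, hb.symm]
  · simp [ha.symm, hb.symm]

end WeightedStar

theorem spectrum_weightedStarLap {m : ℕ} (hm : 3 ≤ m) (w : ℝ) :
    spectrum ℝ (weightedStarLap m w) = {betaMinus m w, 1, betaPlus m w} := by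
  have : NeZero m := ⟨by omega⟩
  have hquad := quadratic_eq_zero_iff_betaMinus_or_betaPlus (m := m) (by omega) w
  set leaf₁ : Fin m := ⟨1, by omega⟩
  set leaf₂ : Fin m := ⟨2, by omega⟩
  have h₁ : leaf₁ ≠ 0 := by simp [leaf₁, Fin.ext_iff]
  have h₂ : leaf₂ ≠ 0 := by simp [leaf₂, Fin.ext_iff]
  have h₁₂ : leaf₁ ≠ leaf₂ := by simp [leaf₁, leaf₂, Fin.ext_iff]
  ext x
  rw [mem_spectrum_iff_exists_mulVec_eq_smul]
  simp only [Set.mem_insert_iff, Set.mem_singleton_iff]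
  constructor
  · rintro ⟨v, hv, hvx⟩
    by_cases hx : x = 1
    · exact Or.inr (Or.inl hx)
    · have := (hquad x).mp (quadratic_eq_zero_of_weightedStarLap w hv hvx hx)
      tauto
  · intro hx
    obtain rfl | hq : x = 1 ∨ x ^ 2 - ((m : ℝ) + w) * x + w = 0 := by rw [hquad]; tauto
    · refine ⟨Pi.single leaf₁ 1 - Pi.single leaf₂ 1, fun h => ?_, ?_⟩
      · simpa [h₁₂] using congrFun h leaf₁
      · rw [weightedStarLap_mulVec_single_sub_single w h₁ h₂, one_smul]
    · refine ⟨fun i => if i = 0 then 1 - x else 1, fun h => ?_,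
        weightedStarLap_mulVec_of_quadratic w hq⟩
      simpa [h₁] using congrFun h leaf₁

theorem stmt19_general (n m : ℕ) (hn : 3 ≤ n) (hm : 4 ≤ m) (wv : ℕ → ℝ)
    (hwpos : 0 < ∑ j ∈ Finset.range n, wv j) :
    (spectrum ℝ (unmodLap n m wv) =
      {x : ℝ | ∃ l : ℕ, l ≤ n ∧ Even l ∧ x = cycAlpha n l} ∪
        {betaMinus m (∑ j ∈ Finset.range n, wv j), 1,
          betaPlus m (∑ j ∈ Finset.range n, wv j)}) ∧
    ((∀ l : ℕ, l ≤ n → betaMinus m (∑ j ∈ Finset.range n, wv j) ≠ cycAlpha n l) →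
      min (cycAlpha n 2) (betaMinus m (∑ j ∈ Finset.range n, wv j)) ∈
          spectrum ℝ (unmodLap n m wv) ∧
      0 < min (cycAlpha n 2) (betaMinus m (∑ j ∈ Finset.range n, wv j)) ∧
      ∀ μ ∈ spectrum ℝ (unmodLap n m wv), μ ≠ 0 →
        min (cycAlpha n 2) (betaMinus m (∑ j ∈ Finset.range n, wv j)) ≤ μ) := by
  set w := ∑ j ∈ Finset.range n, wv j
  have hspec : spectrum ℝ (unmodLap n m wv) =
      {x : ℝ | ∃ l : ℕ, l ≤ n ∧ Even l ∧ x = cycAlpha n l} ∪ {betaMinus m w, 1, betaPlus m w} := by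
    rw [← spectrum_cycleLap hn, ← spectrum_weightedStarLap (by omega)]
    exact spectrum_fromBlocks_zero₁₂ _ _ _
  refine ⟨hspec, fun _ => ⟨?_, lt_min (cycAlpha_pos two_pos (by omega)) (betaMinus_pos hwpos), ?_⟩⟩
  · rw [hspec]
    rcases min_choice (cycAlpha n 2) (betaMinus m w) with h | h <;> rw [h]
    · exact Or.inl ⟨2, by omega, even_two, rfl⟩
    · exact Or.inr (Or.inl rfl)
  · rintro μ hμ hμ0
    rw [hspec] at hμ
    rcases hμ with ⟨l, hl, ⟨r, rfl⟩, rfl⟩ | rfl | rfl | rfl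
    · have hr : r ≠ 0 := by rintro rfl; exact hμ0 (cycAlpha_zero n)
      exact (min_le_left _ _).trans (cycAlpha_le_cycAlpha (by omega) hl)
    · exact min_le_right _ _
    · exact (min_le_right _ _).trans (betaMinus_lt_one (by omega) hwpos.le).le
    · exact (min_le_right _ _).trans (betaMinus_le_betaPlus m w)

theorem stmt19 (n m : ℕ) (hn : 3 ≤ n) (hm : 4 ≤ m) (wv : ℕ → ℝ)
    (hw : ∀ i, 0 ≤ wv i) (hwpos : 0 < ∑ j ∈ Finset.range n, wv j) :
    (spectrum ℝ (unmodLap n m wv) =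
      {x : ℝ | ∃ l : ℕ, l ≤ n ∧ Even l ∧ x = cycAlpha n l} ∪
        {betaMinus m (∑ j ∈ Finset.range n, wv j), 1,
          betaPlus m (∑ j ∈ Finset.range n, wv j)}) ∧
    ((∀ l : ℕ, l ≤ n → betaMinus m (∑ j ∈ Finset.range n, wv j) ≠ cycAlpha n l) →
      min (cycAlpha n 2) (betaMinus m (∑ j ∈ Finset.range n, wv j)) ∈
          spectrum ℝ (unmodLap n m wv) ∧
      0 < min (cycAlpha n 2) (betaMinus m (∑ j ∈ Finset.range n, wv j)) ∧
      ∀ μ ∈ spectrum ℝ (unmodLap n m wv), μ ≠ 0 →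
        min (cycAlpha n 2) (betaMinus m (∑ j ∈ Finset.range n, wv j)) ≤ μ) :=
  stmt19_general n m hn hm wv hwpos
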